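/- An analytic subset A of a Polish space is uncountable if and only if A contains a nonempty perfect subset. -/

import Mathlib

/-!
Write `A = range g` with `g : (ℕ → ℕ) → X` continuous. If `A` is uncountable, then so is the
set of its condensation points, so any open `U` with `g '' U` uncountable contains two open sets
of small diameter, with closures inside `U`, whose images are uncountable and lie in disjoint
neighbourhoods of two distinct condensation points of `g '' U`. Iterating this splitting gives a
Cantor scheme on `ℕ → ℕ` whose induced map `σ` is continuous and total, and `g ∘ σ` is injective;
the image of the Cantor space under `g ∘ σ` is a nonempty perfect subset of `A`. Conversely, a
nonempty perfect set in a Polish space contains an injective image of the Cantor space.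
-/

open Set Function Filter Topology Metric CantorScheme PiNat
open scoped ENNReal

section Condensation

variable {Y : Type*} [TopologicalSpace Y]

def IsCondensationPt (S : Set Y) (x : Y) : Prop :=
  ∀ U ∈ 𝓝 x, ¬ (U ∩ S).Countable

theorem countable_diff_setOf_isCondensationPt [SecondCountableTopology Y] (S : Set Y) :
    (S \ {x | IsCondensationPt S x}).Countable := by
  have hloc : ∀ x ∈ S \ {x | IsCondensationPt S x}, ∃ U ∈ 𝓝 x, (U ∩ S).Countable :=
    fun x hx => by simpa [IsCondensationPt] using hx.2
  choose! U hU hUS using hloc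
  obtain ⟨t, hts, htc, hcover⟩ :=
    TopologicalSpace.countable_cover_nhdsWithin fun x hx => mem_nhdsWithin_of_mem_nhds (hU x hx)
  refine (htc.biUnion fun x hx => hUS x (hts hx)).mono fun y hy => ?_
  obtain ⟨x, hx, hyx⟩ := mem_iUnion₂.1 (hcover hy)
  exact mem_biUnion hx ⟨hyx, hy.1⟩

theorem exists_ne_isCondensationPt [SecondCountableTopology Y] {S : Set Y} (h : ¬ S.Countable) :
    ∃ x₀ x₁, x₀ ≠ x₁ ∧ IsCondensationPt S x₀ ∧ IsCondensationPt S x₁ := by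
  have hT : ¬ {x | IsCondensationPt S x}.Countable := fun hT =>
    h (((countable_diff_setOf_isCondensationPt S).union hT).mono
      (by rw [sdiff_union_self]; exact subset_union_left))
  obtain ⟨x₀, h₀, x₁, h₁, hne⟩ := not_subsingleton_iff.1 fun hs => hT hs.countable
  exact ⟨x₀, x₁, hne, h₀, h₁⟩

end Condensation

section Splitting

variable {N Y : Type*} [PseudoEMetricSpace N] [SecondCountableTopology N] {g : N → Y}
  {U : Set N} {ε : ℝ≥0∞}

theorem exists_isOpen_closure_subset_ediam_le_not_countable_image (hU : IsOpen U)
    (h : ¬ (g '' U).Countable) (hε : 0 < ε) :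
    ∃ V, IsOpen V ∧ closure V ⊆ U ∧ ediam V ≤ ε ∧ ¬ (g '' V).Countable := by
  set 𝒮 := {V | IsOpen V ∧ closure V ⊆ U ∧ ediam V ≤ ε}
  have hcover : U ⊆ ⋃₀ 𝒮 := by
    intro x hx
    obtain ⟨r, hr, hrU⟩ := nhds_basis_closedEBall.mem_iff.1 (hU.mem_nhds hx)
    have hr' : 0 < min r (ε / 2) := lt_min hr (ENNReal.half_pos hε.ne')
    refine ⟨eball x (min r (ε / 2)), ⟨isOpen_eball, ?_, ?_⟩, mem_eball_self hr'⟩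
    · refine (isClosed_closedEBall.closure_subset_iff.2 eball_subset_closedEBall).trans ?_
      exact (closedEBall_subset_closedEBall (min_le_left _ _)).trans hrU
    · calc ediam (eball x (min r (ε / 2))) ≤ 2 * min r (ε / 2) := ediam_eball_le
        _ ≤ 2 * (ε / 2) := by gcongr; exact min_le_right _ _
        _ ≤ ε := ENNReal.mul_div_le
  obtain ⟨T, hTc, hT𝒮, hTU⟩ := TopologicalSpace.isOpen_sUnion_countable 𝒮 fun V hV => hV.1
  by_contra! hsmall
  refine h ((hTc.image (g '' ·)).sUnion ?_ |>.mono ?_)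
  · rintro _ ⟨V, hV, rfl⟩
    exact hsmall V (hT𝒮 hV).1 (hT𝒮 hV).2.1 (hT𝒮 hV).2.2
  · rw [← image_sUnion, hTU]
    exact image_mono hcover

variable [TopologicalSpace Y] [T2Space Y] [SecondCountableTopology Y]

theorem exists_pairwise_disjoint_image_of_not_countable_image (hg : Continuous g) (hU : IsOpen U)
    (h : ¬ (g '' U).Countable) (hε : 0 < ε) :
    ∃ V : Bool → Set N,
      (∀ b, IsOpen (V b) ∧ closure (V b) ⊆ U ∧ ediam (V b) ≤ ε ∧ ¬ (g '' V b).Countable) ∧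
      Pairwise (Disjoint on fun b => g '' V b) := by
  have hpiece : ∀ y W, IsCondensationPt (g '' U) y → IsOpen W → y ∈ W →
      ∃ V, (IsOpen V ∧ closure V ⊆ U ∧ ediam V ≤ ε ∧ ¬ (g '' V).Countable) ∧ g '' V ⊆ W := by
    intro y W hy hW hyW
    have hUW : ¬ (g '' (U ∩ g ⁻¹' W)).Countable := by
      rw [image_inter_preimage, inter_comm]
      exact hy W (hW.mem_nhds hyW)
    obtain ⟨V, hV, hVU, hVε, hVc⟩ :=
      exists_isOpen_closure_subset_ediam_le_not_countable_image (hU.inter (hW.preimage hg)) hUW hε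
    exact ⟨V, ⟨hV, hVU.trans inter_subset_left, hVε, hVc⟩,
      image_subset_iff.2 (subset_closure.trans (hVU.trans inter_subset_right))⟩
  obtain ⟨y₀, y₁, hne, h₀, h₁⟩ := exists_ne_isCondensationPt h
  obtain ⟨W₀, W₁, hW₀, hW₁, hy₀, hy₁, hW⟩ := t2_separation hne
  obtain ⟨V₀, hV₀, hV₀W⟩ := hpiece y₀ W₀ h₀ hW₀ hy₀
  obtain ⟨V₁, hV₁, hV₁W⟩ := hpiece y₁ W₁ h₁ hW₁ hy₁
  refine ⟨fun b => bif b then V₁ else V₀, Bool.forall_bool.2 ⟨hV₀, hV₁⟩, ?_⟩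
  rintro (_ | _) (_ | _) hab
  exacts [absurd rfl hab, hW.mono hV₀W hV₁W, (hW.mono hV₀W hV₁W).symm, absurd rfl hab]

end Splitting

theorem CantorScheme.Disjoint.injective_of_forall_mem {α β : Type*} {A : List β → Set α}
    (hA : CantorScheme.Disjoint A) {f : (ℕ → β) → α} (hf : ∀ x n, f x ∈ A (res x n)) :
    Injective f := by
  intro x y hxy
  apply res_injective
  ext n : 1
  induction n with
  | zero => rfl
  | succ n ih =>
    simp only [res_succ, List.cons.injEq]
    refine ⟨by_contra fun hne => (hA (res x n) hne).ne_of_mem ?_ ?_ hxy, ih⟩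
    · rw [← res_succ]; exact hf x (n + 1)
    · rw [ih, ← res_succ]; exact hf y (n + 1)

theorem exists_nat_bool_injective_comp_of_not_countable_range {N Y : Type*} [PseudoMetricSpace N]
    [CompleteSpace N] [SecondCountableTopology N] [TopologicalSpace Y] [T2Space Y]
    [SecondCountableTopology Y] {g : N → Y} (hg : Continuous g) (h : ¬ (range g).Countable) :
    ∃ σ : (ℕ → Bool) → N, Continuous σ ∧ Injective (g ∘ σ) := by
  obtain ⟨u, -, hu0, hu⟩ := exists_seq_strictAnti_tendsto' (zero_lt_one' ℝ≥0∞)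
  let P := {E : Set N // IsOpen E ∧ ¬ (g '' E).Countable}
  choose V hV hdisj using fun (E : P) n =>
    exists_pairwise_disjoint_image_of_not_countable_image hg E.2.1 E.2.2 (hu0 n).1
  let D : List Bool → P := fun l => l.rec ⟨univ, isOpen_univ, by rwa [image_univ]⟩
    fun b l E => ⟨V E l.length b, (hV E l.length b).1, (hV E l.length b).2.2.2⟩
  let A : List Bool → Set N := fun l => (D l).1
  have hanti : ClosureAntitone A := fun l b => (hV (D l) l.length b).2.1
  have hdiam : VanishingDiam A := by
    intro x
    refine (tendsto_add_atTop_iff_nat 1).1 <|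
      tendsto_of_tendsto_of_tendsto_of_le_of_le tendsto_const_nhds hu (fun _ => bot_le)
        fun n => ?_
    calc ediam (A (res x (n + 1))) ≤ u (res x n).length := (hV _ _ _).2.2.1
      _ = u n := by rw [res_length]
  have hne : ∀ l, (A l).Nonempty := fun l => by
    by_contra hl
    exact (D l).2.2 (by simp [A, not_nonempty_iff_eq_empty.1 hl])
  have hdom := hanti.map_of_vanishingDiam hdiam hne
  let σ : (ℕ → Bool) → N := fun x => (inducedMap A).2 ⟨x, hdom ▸ mem_univ x⟩
  refine ⟨σ, hdiam.map_continuous.comp (by fun_prop), ?_⟩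
  have himage : CantorScheme.Disjoint fun l => g '' A l := fun l => hdisj (D l) l.length
  exact himage.injective_of_forall_mem fun x n => mem_image_of_mem g (map_mem _ n)

theorem MeasureTheory.AnalyticSet.exists_nat_bool_injection_of_not_countable {X : Type*}
    [TopologicalSpace X] [T2Space X] [SecondCountableTopology X] {A : Set X}
    (hA : AnalyticSet A) (h : ¬ A.Countable) :
    ∃ f : (ℕ → Bool) → X, range f ⊆ A ∧ Continuous f ∧ Injective f := by
  rw [AnalyticSet] at hA
  rcases hA with rfl | ⟨g, hg, rfl⟩
  · exact absurd countable_empty h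
  let := TopologicalSpace.upgradeIsCompletelyMetrizable (ℕ → ℕ)
  obtain ⟨σ, hσ, hinj⟩ := exists_nat_bool_injective_comp_of_not_countable_range hg h
  exact ⟨g ∘ σ, range_comp_subset_range σ g, hg.comp hσ, hinj⟩

instance {α : Type*} [TopologicalSpace α] [DiscreteTopology α] [Nontrivial α] :
    PerfectSpace (ℕ → α) := by
  refine ⟨preperfect_iff_nhds.2 fun x _ U hU => ?_⟩
  obtain ⟨_, ⟨y, n, rfl⟩, hxy, hyU⟩ :=
    (isTopologicalBasis_cylinders fun _ => α).mem_nhds_iff.1 hU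
  obtain ⟨a, ha⟩ := exists_ne (x n)
  refine ⟨update x n a, ⟨hyU ?_, mem_univ _⟩, fun h => ha (by simpa using congrFun h n)⟩
  rw [← mem_cylinder_iff_eq.1 hxy]
  exact update_mem_cylinder x n a

theorem perfect_range_of_injective {K X : Type*} [TopologicalSpace K] [CompactSpace K]
    [PerfectSpace K] [TopologicalSpace X] [T2Space X] {f : K → X} (hf : Continuous f)
    (hinj : Injective f) : Perfect (range f) := by
  refine ⟨(isCompact_range hf).isClosed, ?_⟩
  rintro _ ⟨x, rfl⟩
  simpa [map_principal] using
    (PerfectSpace.univ_preperfect x (mem_univ x)).map hf.continuousAt hinj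

theorem Perfect.not_countable {X : Type*} [TopologicalSpace X] [PolishSpace X] {C : Set X}
    (hC : Perfect C) (hne : C.Nonempty) : ¬ C.Countable := by
  let := TopologicalSpace.upgradeIsCompletelyMetrizable X
  obtain ⟨f, hfC, -, hinj⟩ := hC.exists_nat_bool_injection hne
  have : Uncountable (ℕ → Bool) := by
    rw [← Cardinal.aleph0_lt_mk_iff]
    simpa using Cardinal.aleph0_lt_continuum
  intro hc
  have := (hc.mono hfC).to_subtype
  exact _root_.not_countable (Equiv.ofInjective f hinj).injective.countable

theorem preperfect_iff_forall_isOpen {X : Type*} [TopologicalSpace X] {C : Set X} :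
    Preperfect C ↔ ∀ x ∈ C, ∀ U : Set X, IsOpen U → x ∈ U → ∃ y ∈ C ∩ U, y ≠ x := by
  refine preperfect_iff_nhds.trans ⟨fun h x hx U hU hxU => ?_, fun h x hx U hU => ?_⟩
  · obtain ⟨y, hy, hne⟩ := h x hx U (hU.mem_nhds hxU)
    exact ⟨y, hy.symm, hne⟩
  · obtain ⟨V, hVU, hV, hxV⟩ := mem_nhds_iff.1 hU
    obtain ⟨y, hy, hne⟩ := h x hx V hV hxV
    exact ⟨y, ⟨hVU hy.2, hy.1⟩, hne⟩

/-- An analytic subset `A` of a Polish space is uncountable if and only if `A`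
contains a nonempty perfect subset (a nonempty closed set without isolated points). -/
theorem stmt_7 (X : Type) [TopologicalSpace X] [PolishSpace X]
    (A : Set X) (hA : MeasureTheory.AnalyticSet A) :
    ¬ A.Countable ↔
      ∃ P : Set X, P ⊆ A ∧ P.Nonempty ∧ IsClosed P ∧
        ∀ x ∈ P, ∀ U : Set X, IsOpen U → x ∈ U → ∃ y ∈ P ∩ U, y ≠ x := by
  simp_rw [← preperfect_iff_forall_isOpen]
  constructor
  · intro h
    obtain ⟨f, hfA, hf, hinj⟩ := hA.exists_nat_bool_injection_of_not_countable h
    have hP := perfect_range_of_injective hf hinj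
    exact ⟨range f, hfA, range_nonempty f, hP.closed, hP.acc⟩
  · rintro ⟨P, hPA, hne, hcl, hacc⟩ hAc
    exact Perfect.not_countable ⟨hcl, hacc⟩ hne (hAc.mono hPA)
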